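/- In a right-angled Artin group A_Γ with standard generating set, κ(g) = 0 if g is central, and κ(g) < 0 if g is not central. -/

import Mathlib

/-!
Reduced words in the letters `v^{±1}`, taken up to swapping adjacent letters that commute, are
normal forms in `A_Γ`: two such words are equivalent iff their projections onto every pair of
non-adjacent vertices agree, and `A_Γ` acts on the classes of reduced words by left
multiplication. Hence `|g|` is the length of any reduced word for `g`, `|s g| = |g| ± 1` for a
generator `s`, and `|s g| < |g|` for at most one of `s`, `s⁻¹`. These facts alone give
`|s⁻¹ g s| + |s g s⁻¹| ≥ 2 |g|`. If `g` is not central, some vertex `v` neither begins a reduced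
word for `g` nor commutes with all of its letters; then one of the two conjugates by `v^{±1}`
gains two letters, so `Av(g) > |g|`. A central `g` equals all of its conjugates.
-/

open Filter Topology

section WL
variable {G : Type*} [Group G]

/-- Word length of `g` with respect to a generating set `S`. -/
noncomputable def wl (S : Set G) (g : G) : ℕ :=
  sInf {n | ∃ l : List G, (∀ x ∈ l, x ∈ S) ∧ l.length = n ∧ l.prod = g}

/-- Average word length of conjugates of `g` by elements of `S`. -/
noncomputable def Av (S : Finset G) (g : G) : ℝ :=
  (∑ a ∈ S, (wl (S : Set G) (a⁻¹ * g * a) : ℝ)) / S.card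

/-- Medium-scale Ricci curvature `κ(g) = (|g| - Av(g))/|g|`. -/
noncomputable def curv (S : Finset G) (g : G) : ℝ :=
  ((wl (S : Set G) g : ℝ) - Av S g) / (wl (S : Set G) g)

end WL


open scoped commutatorElement in
/-- Commutator relators of a right-angled Artin group on the graph `Γ`. -/
def raagRels {V : Type*} (Γ : SimpleGraph V) : Set (FreeGroup V) :=
  {w | ∃ u v : V, Γ.Adj u v ∧ w = ⁅FreeGroup.of u, FreeGroup.of v⁆}

/-- The right-angled Artin group on the graph `Γ`. -/
abbrev RAAG {V : Type*} (Γ : SimpleGraph V) : Type _ :=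
  PresentedGroup (raagRels Γ)

/-- The standard symmetric generating set `V(Γ)^±` of the RAAG. -/
noncomputable def raagS {V : Type*} [Fintype V] (Γ : SimpleGraph V) :
    Finset (RAAG Γ) := by
  classical
  exact Finset.univ.image (fun v : V => (PresentedGroup.of v : RAAG Γ)) ∪
    Finset.univ.image (fun v : V => (PresentedGroup.of v : RAAG Γ)⁻¹)


section Curvature

variable {G : Type*} [Group G] {S : Finset G} {g : G}

lemma curv_eq_zero_of_mem_center (hS : S.Nonempty) (hg : g ∈ Subgroup.center G) :
    curv S g = 0 := by
  have hconj (a : G) : a⁻¹ * g * a = g := by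
    rw [mul_assoc, ← Subgroup.mem_center_iff.mp hg a, inv_mul_cancel_left]
  rw [curv, Av, Finset.sum_congr rfl fun a _ => by rw [hconj a], Finset.sum_const, nsmul_eq_mul,
    mul_div_cancel_left₀ _ (Nat.cast_ne_zero.mpr hS.card_pos.ne'), sub_self, zero_div]

lemma curv_neg_of_lt_av (hg : 0 < wl (S : Set G) g) (h : (wl (S : Set G) g : ℝ) < Av S g) :
    curv S g < 0 :=
  div_neg_of_neg_of_pos (sub_neg.mpr h) (Nat.cast_pos.mpr hg)

lemma lt_av_of_conj (hS : ∀ a ∈ S, a⁻¹ ∈ S)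
    (hle : ∀ a ∈ S, 2 * wl S g ≤ wl S (a⁻¹ * g * a) + wl S (a * g * a⁻¹))
    (hlt : ∃ a ∈ S, 2 * wl S g < wl S (a⁻¹ * g * a) + wl S (a * g * a⁻¹)) :
    (wl (S : Set G) g : ℝ) < Av S g := by
  have hinv : ∑ a ∈ S, wl S (a * g * a⁻¹) = ∑ a ∈ S, wl S (a⁻¹ * g * a) :=
    Finset.sum_nbij' (·⁻¹) (·⁻¹) hS hS (fun a _ => inv_inv a) (fun a _ => inv_inv a)
      fun a _ => by rw [inv_inv]
  have hsum := Finset.sum_lt_sum hle hlt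
  rw [Finset.sum_add_distrib, hinv, Finset.sum_const, smul_eq_mul] at hsum
  have hcard : (0 : ℝ) < S.card := by
    obtain ⟨a, ha, -⟩ := hlt
    exact Nat.cast_pos.mpr (Finset.card_pos.mpr ⟨a, ha⟩)
  rw [mul_left_comm] at hsum
  have hsum' : (S.card : ℝ) * wl S g < ∑ a ∈ S, (wl S (a⁻¹ * g * a) : ℝ) := by
    rw [← Nat.cast_sum]
    exact_mod_cast (by omega : S.card * wl S g < ∑ a ∈ S, wl S (a⁻¹ * g * a))
  rw [Av, lt_div_iff₀ hcard]
  linarith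

end Curvature

namespace RAAG

section Traces

variable {V : Type*} (Γ : SimpleGraph V)

/-- Letters `(v, true)` and `(v, false)` stand for `v` and `v⁻¹`, as in `FreeGroup.mk`. -/
def letterInv (l : V × Bool) : V × Bool := (l.1, !l.2)

@[simp] lemma letterInv_letterInv (l : V × Bool) : letterInv (letterInv l) = l := by
  simp [letterInv]

@[simp] lemma letterInv_fst (l : V × Bool) : (letterInv l).1 = l.1 := rfl

lemma letterInv_ne (l : V × Bool) : letterInv l ≠ l := by
  simp [letterInv, Prod.ext_iff]

inductive SwapStep : List (V × Bool) → List (V × Bool) → Prop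
  | swap (x y : List (V × Bool)) (a b : V × Bool) (h : Γ.Adj a.1 b.1) :
      SwapStep (x ++ a :: b :: y) (x ++ b :: a :: y)

def TraceEq : List (V × Bool) → List (V × Bool) → Prop :=
  Relation.ReflTransGen (SwapStep Γ)

variable {Γ}

namespace TraceEq

@[refl] lemma refl (w : List (V × Bool)) : TraceEq Γ w w := Relation.ReflTransGen.refl

lemma trans {w u v : List (V × Bool)} (h₁ : TraceEq Γ w u) (h₂ : TraceEq Γ u v) :
    TraceEq Γ w v :=
  Relation.ReflTransGen.trans h₁ h₂

lemma swap (x y : List (V × Bool)) {a b : V × Bool} (h : Γ.Adj a.1 b.1) :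
    TraceEq Γ (x ++ a :: b :: y) (x ++ b :: a :: y) :=
  Relation.ReflTransGen.single (SwapStep.swap x y a b h)

lemma symm {w u : List (V × Bool)} (h : TraceEq Γ w u) : TraceEq Γ u w := by
  induction h with
  | refl => rfl
  | tail _ hstep ih =>
    obtain ⟨x, y, a, b, hab⟩ := hstep
    exact (swap x y hab.symm).trans ih

lemma cons {w u : List (V × Bool)} (l : V × Bool) (h : TraceEq Γ w u) :
    TraceEq Γ (l :: w) (l :: u) := by
  refine Relation.ReflTransGen.lift (l :: ·) (fun _ _ hstep => ?_) _ _ h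
  obtain ⟨x, y, a, b, hab⟩ := hstep
  exact SwapStep.swap (l :: x) y a b hab

lemma perm {w u : List (V × Bool)} (h : TraceEq Γ w u) : w.Perm u := by
  induction h with
  | refl => rfl
  | tail _ hstep ih =>
    obtain ⟨x, y, a, b, -⟩ := hstep
    exact ih.trans ((List.Perm.swap b a y).append_left x)

lemma length_eq {w u : List (V × Bool)} (h : TraceEq Γ w u) : w.length = u.length :=
  h.perm.length_eq

lemma move_front (l : V × Bool) (y z : List (V × Bool)) (hy : ∀ m ∈ y, Γ.Adj m.1 l.1) :
    TraceEq Γ (y ++ l :: z) (l :: (y ++ z)) := by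
  induction y with
  | nil => rfl
  | cons m y ih =>
    have hm : TraceEq Γ (m :: (y ++ l :: z)) (m :: l :: (y ++ z)) :=
      (ih fun m' hm' => hy m' (List.mem_cons_of_mem _ hm')).cons m
    exact hm.trans (swap [] (y ++ z) (hy m List.mem_cons_self))

end TraceEq

section Projection

variable [DecidableEq V]

def proj (a b : V) (w : List (V × Bool)) : List (V × Bool) :=
  w.filter fun l => l.1 = a ∨ l.1 = b

lemma proj_cons_of_mem (a b : V) {l : V × Bool} (h : l.1 = a ∨ l.1 = b) (w : List (V × Bool)) :
    proj a b (l :: w) = l :: proj a b w := by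
  simp [proj, h]

lemma proj_cons_of_not_mem (a b : V) {l : V × Bool} (h : ¬(l.1 = a ∨ l.1 = b))
    (w : List (V × Bool)) : proj a b (l :: w) = proj a b w := by
  simp [proj, h]

lemma proj_append (a b : V) (w u : List (V × Bool)) :
    proj a b (w ++ u) = proj a b w ++ proj a b u :=
  List.filter_append ..

lemma TraceEq.proj_eq {w u : List (V × Bool)} (h : TraceEq Γ w u) {a b : V}
    (hab : ¬Γ.Adj a b) : proj a b w = proj a b u := by
  induction h with
  | refl => rfl
  | tail _ hstep ih =>
    obtain ⟨x, y, c, d, hcd⟩ := hstep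
    rw [ih]
    have : ¬((c.1 = a ∨ c.1 = b) ∧ (d.1 = a ∨ d.1 = b)) := by
      rintro ⟨hc | hc, hd | hd⟩
      · exact Γ.ne_of_adj hcd (hc.trans hd.symm)
      · exact hab (hc ▸ hd ▸ hcd)
      · exact hab (hd ▸ hc ▸ hcd.symm)
      · exact Γ.ne_of_adj hcd (hc.trans hd.symm)
    by_cases hc : c.1 = a ∨ c.1 = b <;> by_cases hd : d.1 = a ∨ d.1 = b <;>
      simp_all [proj_append, proj_cons_of_mem, proj_cons_of_not_mem]

lemma exists_eq_append_cons_of_proj (l : V × Bool) (u : List (V × Bool))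
    (h : ∀ c, ¬Γ.Adj c l.1 → ∃ t, proj c l.1 u = l :: t) :
    ∃ y z, u = y ++ l :: z ∧ ∀ m ∈ y, Γ.Adj m.1 l.1 := by
  induction u with
  | nil =>
    obtain ⟨t, ht⟩ := h l.1 (Γ.irrefl)
    simp [proj] at ht
  | cons m u ih =>
    by_cases hml : m = l
    · exact ⟨[], u, by simp [hml], by simp⟩
    have hm : m.1 ≠ l.1 := fun hv => by
      obtain ⟨t, ht⟩ := h l.1 (Γ.irrefl)
      rw [proj_cons_of_mem _ _ (Or.inl hv)] at ht
      exact hml (List.head_eq_of_cons_eq ht)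
    have hadj : Γ.Adj m.1 l.1 := by
      by_contra hna
      obtain ⟨t, ht⟩ := h m.1 hna
      rw [proj_cons_of_mem _ _ (Or.inl rfl)] at ht
      exact hml (List.head_eq_of_cons_eq ht)
    obtain ⟨y, z, rfl, hy⟩ := ih fun c hc => by
      have hmc : ¬(m.1 = c ∨ m.1 = l.1) := by
        rintro (rfl | h')
        exacts [hc hadj, hm h']
      simpa [proj_cons_of_not_mem _ _ hmc] using h c hc
    exact ⟨m :: y, z, rfl, by simpa [hadj] using hy⟩

lemma traceEq_of_proj_eq {w w' : List (V × Bool)}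
    (h : ∀ a b, ¬Γ.Adj a b → proj a b w = proj a b w') : TraceEq Γ w w' := by
  induction w generalizing w' with
  | nil =>
    cases w' with
    | nil => rfl
    | cons m _ =>
      have := h m.1 m.1 (Γ.irrefl)
      simp [proj] at this
  | cons l w ih =>
    obtain ⟨y, z, rfl, hy⟩ := exists_eq_append_cons_of_proj l w' fun c hc =>
      ⟨proj c l.1 w, by rw [← h c l.1 hc, proj_cons_of_mem _ _ (Or.inr rfl)]⟩
    have hproj_y : ∀ a b, ¬Γ.Adj a b → (l.1 = a ∨ l.1 = b) → proj a b y = [] := by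
      intro a b hab hl
      refine List.filter_eq_nil_iff.mpr fun m hm hmab => ?_
      have hadj := hy m hm
      simp only [decide_eq_true_eq] at hmab
      rcases hmab with rfl | rfl <;> rcases hl with hl | hl
      · exact Γ.ne_of_adj hadj hl.symm
      · exact hab (hl ▸ hadj)
      · exact hab (hl ▸ hadj.symm)
      · exact Γ.ne_of_adj hadj hl.symm
    refine (ih fun a b hab => ?_).cons l |>.trans (TraceEq.move_front l y z hy).symm
    have hw := h a b hab
    rw [proj_append] at hw ⊢
    by_cases hl : l.1 = a ∨ l.1 = b
    · rw [proj_cons_of_mem _ _ hl, proj_cons_of_mem _ _ hl, hproj_y a b hab hl] at hw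
      rw [hproj_y a b hab hl]
      simpa using hw
    · rwa [proj_cons_of_not_mem _ _ hl, proj_cons_of_not_mem _ _ hl] at hw

lemma traceEq_iff_proj_eq {w w' : List (V × Bool)} :
    TraceEq Γ w w' ↔ ∀ a b, ¬Γ.Adj a b → proj a b w = proj a b w' :=
  ⟨fun h _ _ hab => h.proj_eq hab, traceEq_of_proj_eq⟩

end Projection

lemma TraceEq.of_cons {l : V × Bool} {w u : List (V × Bool)}
    (h : TraceEq Γ (l :: w) (l :: u)) : TraceEq Γ w u := by
  classical
  rw [traceEq_iff_proj_eq] at h ⊢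
  intro a b hab
  by_cases hl : l.1 = a ∨ l.1 = b
  · simpa [proj_cons_of_mem _ _ hl] using h a b hab
  · simpa [proj_cons_of_not_mem _ _ hl] using h a b hab

lemma TraceEq.exists_of_cons {l : V × Bool} {w u : List (V × Bool)} (h : TraceEq Γ (l :: w) u) :
    ∃ y z, u = y ++ l :: z ∧ (∀ m ∈ y, Γ.Adj m.1 l.1) ∧ TraceEq Γ w (y ++ z) := by
  classical
  obtain ⟨y, z, rfl, hy⟩ := exists_eq_append_cons_of_proj l u fun c hc =>
    ⟨proj c l.1 w, by rw [← h.proj_eq hc, proj_cons_of_mem _ _ (Or.inr rfl)]⟩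
  exact ⟨y, z, rfl, hy, (h.trans (TraceEq.move_front l y z hy)).of_cons⟩

variable (Γ) in
def StartsWith (w : List (V × Bool)) (l : V × Bool) : Prop :=
  ∃ w', TraceEq Γ w (l :: w')

variable (Γ) in
def Reduced (w : List (V × Bool)) : Prop :=
  ¬∃ x z a, TraceEq Γ w (x ++ a :: letterInv a :: z)

lemma StartsWith.of_traceEq {w u : List (V × Bool)} {l : V × Bool} (h : TraceEq Γ w u)
    (hu : StartsWith Γ u l) : StartsWith Γ w l :=
  let ⟨u', hu'⟩ := hu; ⟨u', h.trans hu'⟩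

lemma StartsWith.adj_of_ne {w : List (V × Bool)} {a b : V × Bool} (ha : StartsWith Γ w a)
    (hb : StartsWith Γ w b) (hab : a ≠ b) : Γ.Adj a.1 b.1 ∧ ∃ w', TraceEq Γ w (a :: b :: w') := by
  obtain ⟨wa, hwa⟩ := ha
  obtain ⟨wb, hwb⟩ := hb
  obtain ⟨_ | ⟨b', y⟩, z, hbz, hy, hwaz⟩ := (hwa.symm.trans hwb).exists_of_cons
  · exact absurd (List.head_eq_of_cons_eq hbz).symm hab
  · obtain ⟨rfl, -⟩ := List.cons_eq_cons.mp hbz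
    exact ⟨(hy b List.mem_cons_self).symm, y ++ z, hwa.trans (hwaz.cons a)⟩

lemma StartsWith.mem {w : List (V × Bool)} {l : V × Bool} (h : StartsWith Γ w l) : l ∈ w :=
  let ⟨_, hw⟩ := h; hw.perm.mem_iff.mpr List.mem_cons_self

lemma StartsWith.cons {w : List (V × Bool)} {l m : V × Bool} (h : StartsWith Γ w l)
    (hml : Γ.Adj m.1 l.1) : StartsWith Γ (m :: w) l :=
  let ⟨w', hw'⟩ := h; ⟨m :: w', (hw'.cons m).trans (TraceEq.swap [] w' hml)⟩

lemma StartsWith.of_cons {w : List (V × Bool)} {l m : V × Bool} (h : StartsWith Γ (m :: w) l)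
    (hml : m ≠ l) : StartsWith Γ w l := by
  obtain ⟨w', hw'⟩ := h
  obtain ⟨_ | ⟨m', y⟩, z, hdec, hy, -⟩ := hw'.symm.exists_of_cons
  · exact absurd (List.head_eq_of_cons_eq hdec) hml
  · obtain ⟨rfl, rfl⟩ := List.cons_eq_cons.mp hdec
    exact ⟨y ++ z, TraceEq.move_front l y z fun m hm => hy m (List.mem_cons_of_mem _ hm)⟩

lemma StartsWith.not_letterInv {w : List (V × Bool)} {l : V × Bool} (h : StartsWith Γ w l) :
    ¬StartsWith Γ w (letterInv l) := fun h' =>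
  Γ.ne_of_adj (h.adj_of_ne h' (letterInv_ne l).symm).1 rfl

lemma reduced_nil : Reduced Γ [] := by
  rintro ⟨x, z, a, h⟩
  simpa using h.length_eq

lemma Reduced.of_traceEq {w u : List (V × Bool)} (h : TraceEq Γ w u) (hw : Reduced Γ w) :
    Reduced Γ u := fun ⟨x, z, a, hu⟩ => hw ⟨x, z, a, h.trans hu⟩

lemma Reduced.of_cons {l : V × Bool} {w : List (V × Bool)} (h : Reduced Γ (l :: w)) :
    Reduced Γ w := fun ⟨x, z, a, hw⟩ => h ⟨l :: x, z, a, by simpa using hw.cons l⟩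

lemma Reduced.of_startsWith {w w' : List (V × Bool)} {l : V × Bool} (hw : Reduced Γ w)
    (h : TraceEq Γ w (l :: w')) : Reduced Γ w' :=
  (hw.of_traceEq h).of_cons

lemma Reduced.not_startsWith_letterInv {l : V × Bool} {w : List (V × Bool)}
    (h : Reduced Γ (l :: w)) : ¬StartsWith Γ w (letterInv l) := fun ⟨w', hw'⟩ =>
  h ⟨[], w', l, by simpa using hw'.cons l⟩

lemma Reduced.cons {w : List (V × Bool)} (hw : Reduced Γ w) {l : V × Bool}
    (hl : ¬StartsWith Γ w (letterInv l)) : Reduced Γ (l :: w) := by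
  rintro ⟨x, z, a, h⟩
  obtain ⟨y, t, hdec, hy, hwt⟩ := h.exists_of_cons
  -- locate the moved letter `l` relative to the cancelling pair `a, a⁻¹`
  rcases List.append_eq_append_iff.mp hdec.symm with ⟨_ | ⟨b, u⟩, rfl, hu⟩ | ⟨u, rfl, hu⟩
  · obtain ⟨rfl, rfl⟩ := List.cons_eq_cons.mp hu
    exact hl ⟨y ++ z, by simpa using hwt.trans (TraceEq.move_front _ y z hy)⟩
  · obtain ⟨rfl, rfl⟩ := List.cons_eq_cons.mp hu
    exact hw ⟨y ++ u, z, a, by simpa using hwt⟩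
  · match u, hu with
    | [], hu =>
      obtain ⟨rfl, rfl⟩ := List.cons_eq_cons.mp hu
      have hy' : ∀ m ∈ x, Γ.Adj m.1 a.1 := by simpa using hy
      rw [List.append_nil] at hwt
      exact hl ⟨x ++ z, hwt.trans (TraceEq.move_front (letterInv a) x z hy')⟩
    | [b], hu =>
      obtain ⟨rfl, rfl, rfl⟩ : a = b ∧ letterInv a = l ∧ z = t := by simpa using hu
      exact Γ.irrefl (hy a (by simp))
    | b :: b' :: u, hu =>
      obtain ⟨rfl, rfl, rfl⟩ : a = b ∧ letterInv a = b' ∧ z = u ++ l :: t := by simpa using hu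
      exact hw ⟨x, u ++ t, a, by simpa using hwt⟩

lemma TraceEq.invRev {w u : List (V × Bool)} (h : TraceEq Γ w u) :
    TraceEq Γ (FreeGroup.invRev w) (FreeGroup.invRev u) := by
  refine Relation.ReflTransGen.lift FreeGroup.invRev (fun _ _ hstep => ?_) _ _ h
  obtain ⟨x, y, a, b, hab⟩ := hstep
  simpa [Function.onFun, FreeGroup.invRev, letterInv] using
    SwapStep.swap (FreeGroup.invRev y) (FreeGroup.invRev x) (letterInv b) (letterInv a) hab.symm

lemma Reduced.invRev {w : List (V × Bool)} (hw : Reduced Γ w) :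
    Reduced Γ (FreeGroup.invRev w) := fun ⟨x, z, a, h⟩ =>
  hw ⟨FreeGroup.invRev z, FreeGroup.invRev x, a, by
    simpa [FreeGroup.invRev, letterInv, Function.comp_def] using h.invRev⟩

end Traces

section Evaluation

variable {V : Type*} (Γ : SimpleGraph V)

def eval (w : List (V × Bool)) : RAAG Γ :=
  PresentedGroup.mk _ (FreeGroup.mk w)

variable {Γ}

@[simp] lemma eval_nil : eval Γ [] = 1 := by
  simp [eval, ← FreeGroup.one_eq_mk]

lemma eval_append (w u : List (V × Bool)) : eval Γ (w ++ u) = eval Γ w * eval Γ u := by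
  simp [eval, ← FreeGroup.mul_mk]

lemma eval_cons (l : V × Bool) (w : List (V × Bool)) :
    eval Γ (l :: w) = eval Γ [l] * eval Γ w :=
  eval_append [l] w

lemma eval_invRev (w : List (V × Bool)) : eval Γ (FreeGroup.invRev w) = (eval Γ w)⁻¹ := by
  simp [eval, ← FreeGroup.inv_mk]

lemma eval_letterInv (l : V × Bool) : eval Γ [letterInv l] = (eval Γ [l])⁻¹ :=
  eval_invRev [l]

lemma eval_surjective : Function.Surjective (eval Γ) := by
  classical
  intro g
  obtain ⟨x, rfl⟩ := PresentedGroup.mk_surjective _ g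
  exact ⟨x.toWord, by rw [eval, FreeGroup.mk_toWord]⟩

open scoped commutatorElement in
lemma commute_of_adj {u v : V} (h : Γ.Adj u v) :
    Commute (PresentedGroup.of u : RAAG Γ) (PresentedGroup.of v) := by
  rw [← commutatorElement_eq_one_iff_commute]
  show ⁅PresentedGroup.mk _ (FreeGroup.of u), PresentedGroup.mk _ (FreeGroup.of v)⁆ = 1
  simpa [map_commutatorElement] using
    (PresentedGroup.one_of_mem ⟨u, v, h, rfl⟩ : PresentedGroup.mk (raagRels Γ) _ = 1)

lemma eval_singleton_eq_or (l : V × Bool) :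
    eval Γ [l] = PresentedGroup.of l.1 ∨ eval Γ [l] = (PresentedGroup.of l.1)⁻¹ := by
  obtain ⟨v, _ | _⟩ := l
  · exact Or.inr (eval_letterInv (v, true))
  · exact Or.inl rfl

lemma commute_eval_singleton {a b : V × Bool} (h : a.1 = b.1 ∨ Γ.Adj a.1 b.1) :
    Commute (eval Γ [a]) (eval Γ [b]) := by
  have hab : Commute (PresentedGroup.of a.1 : RAAG Γ) (PresentedGroup.of b.1) :=
    h.elim (fun e => e ▸ Commute.refl _) commute_of_adj
  rcases eval_singleton_eq_or a with ha | ha <;> rcases eval_singleton_eq_or b with hb | hb <;>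
    rw [ha, hb]
  exacts [hab, hab.inv_right, hab.inv_left, hab.inv_inv]

lemma TraceEq.eval_eq {w u : List (V × Bool)} (h : TraceEq Γ w u) : eval Γ w = eval Γ u := by
  induction h with
  | refl => rfl
  | tail _ hstep ih =>
    obtain ⟨x, y, a, b, hab⟩ := hstep
    rw [ih, eval_append, eval_append, eval_cons a (b :: y), eval_cons b y, eval_cons b (a :: y),
      eval_cons a y, (commute_eval_singleton (Or.inr hab)).left_comm]

lemma exists_reduced_eval_eq_le (w : List (V × Bool)) :
    ∃ w₀, Reduced Γ w₀ ∧ eval Γ w₀ = eval Γ w ∧ w₀.length ≤ w.length := by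
  induction hn : w.length using Nat.strong_induction_on generalizing w with
  | _ n ih =>
  by_cases hw : Reduced Γ w
  · exact ⟨w, hw, rfl, hn.le⟩
  obtain ⟨x, z, a, h⟩ := not_not.mp hw
  have hlen : (x ++ z).length < n := by
    have := h.length_eq
    simp only [List.length_append, List.length_cons] at this ⊢
    omega
  obtain ⟨w₀, hw₀, heval, hle⟩ := ih _ hlen (x ++ z) rfl
  refine ⟨w₀, hw₀, ?_, by omega⟩
  rw [heval, h.eval_eq, eval_append, eval_append, eval_cons a, eval_cons (letterInv a),
    eval_letterInv, mul_inv_cancel_left]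

lemma eval_eq_prod (w : List (V × Bool)) : eval Γ w = (w.map (eval Γ [·])).prod := by
  induction w with
  | nil => simp
  | cons l w ih => rw [eval_cons, ih, List.map_cons, List.prod_cons]

lemma eval_mem_center {w : List (V × Bool)} (h : ∀ v, ∀ m ∈ w, m.1 = v ∨ Γ.Adj m.1 v) :
    eval Γ w ∈ Subgroup.center (RAAG Γ) := by
  rw [Subgroup.mem_center_iff]
  intro g
  obtain ⟨u, rfl⟩ := eval_surjective g
  rw [eval_eq_prod u, eval_eq_prod w]
  refine Commute.list_prod_left _ _ fun _ ha => Commute.list_prod_right _ _ fun _ hb => ?_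
  obtain ⟨a, -, rfl⟩ := List.mem_map.mp ha
  obtain ⟨b, hbw, rfl⟩ := List.mem_map.mp hb
  rcases h a.1 b hbw with e | e
  exacts [commute_eval_singleton (Or.inl e.symm), commute_eval_singleton (Or.inr e.symm)]

lemma exists_vertex_of_not_mem_center {w : List (V × Bool)}
    (hg : eval Γ w ∉ Subgroup.center (RAAG Γ)) :
    ∃ v, (∀ b, ¬StartsWith Γ w (v, b)) ∧ ∃ m ∈ w, ¬Γ.Adj m.1 v := by
  by_contra! H
  have hstart (v : V) {c : V × Bool} (hc : c ∈ w) (hcv : ¬Γ.Adj c.1 v) :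
      ∃ b, StartsWith Γ w (v, b) := by
    by_contra! h
    exact hcv (H v h c hc)
  refine hg (eval_mem_center fun v m hm => ?_)
  by_contra! hmv
  obtain ⟨b, hb⟩ := hstart v hm hmv.2
  obtain ⟨b', hb'⟩ := hstart m.1 hb.mem fun h => hmv.2 h.symm
  exact hmv.2 (hb'.adj_of_ne hb fun h => hmv.1 (congrArg Prod.fst h)).1

lemma exists_reduced_eval_eq (g : RAAG Γ) : ∃ w, Reduced Γ w ∧ eval Γ w = g := by
  obtain ⟨w, rfl⟩ := eval_surjective g
  obtain ⟨w₀, hw₀, heval, -⟩ := exists_reduced_eval_eq_le w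
  exact ⟨w₀, hw₀, heval⟩

end Evaluation

section Action

variable {V : Type*} (Γ : SimpleGraph V)

def traceSetoid : Setoid {w : List (V × Bool) // Reduced Γ w} where
  r w u := TraceEq Γ w u
  iseqv := ⟨fun w => TraceEq.refl w.1, TraceEq.symm, TraceEq.trans⟩

def ReducedTrace : Type _ := Quotient (traceSetoid Γ)

variable {Γ}

def ReducedTrace.mk (w : List (V × Bool)) (hw : Reduced Γ w) : ReducedTrace Γ :=
  Quotient.mk (traceSetoid Γ) ⟨w, hw⟩

lemma ReducedTrace.mk_eq_mk {w u : List (V × Bool)} {hw : Reduced Γ w} {hu : Reduced Γ u} :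
    ReducedTrace.mk w hw = ReducedTrace.mk u hu ↔ TraceEq Γ w u :=
  Quotient.eq (r := traceSetoid Γ)

open Classical in
noncomputable def mulLetter (l : V × Bool) (w : {w : List (V × Bool) // Reduced Γ w}) :
    ReducedTrace Γ :=
  if h : StartsWith Γ w (letterInv l) then
    .mk h.choose (w.2.of_startsWith h.choose_spec)
  else
    .mk (l :: w) (w.2.cons h)

lemma mulLetter_of_traceEq {l : V × Bool} {w : {w : List (V × Bool) // Reduced Γ w}}
    {w' : List (V × Bool)} (h : TraceEq Γ w (letterInv l :: w')) (hw' : Reduced Γ w') :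
    mulLetter l w = .mk w' hw' := by
  have hs : StartsWith Γ w (letterInv l) := ⟨w', h⟩
  rw [mulLetter, dif_pos hs, ReducedTrace.mk_eq_mk]
  exact (hs.choose_spec.symm.trans h).of_cons

lemma mulLetter_of_not_startsWith {l : V × Bool} {w : {w : List (V × Bool) // Reduced Γ w}}
    (h : ¬StartsWith Γ w (letterInv l)) : mulLetter l w = .mk (l :: w) (w.2.cons h) :=
  dif_neg h

noncomputable def act (l : V × Bool) : ReducedTrace Γ → ReducedTrace Γ :=
  Quotient.lift (mulLetter l) fun w u (hwu : TraceEq Γ w u) => by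
    by_cases h : StartsWith Γ u (letterInv l)
    · obtain ⟨u', hu'⟩ := h
      have hred := u.2.of_startsWith hu'
      rw [mulLetter_of_traceEq hu' hred, mulLetter_of_traceEq (hwu.trans hu') hred]
    · have h' : ¬StartsWith Γ w (letterInv l) := fun hw => h (hw.of_traceEq hwu.symm)
      rw [mulLetter_of_not_startsWith h, mulLetter_of_not_startsWith h', ReducedTrace.mk_eq_mk]
      exact hwu.cons l

lemma act_mk_of_traceEq {l : V × Bool} {w w' : List (V × Bool)} {hw : Reduced Γ w}
    (h : TraceEq Γ w (letterInv l :: w')) (hw' : Reduced Γ w') :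
    act l (.mk w hw) = .mk w' hw' :=
  mulLetter_of_traceEq (w := ⟨w, hw⟩) h hw'

lemma act_mk_of_not_startsWith {l : V × Bool} {w : List (V × Bool)} {hw : Reduced Γ w}
    (h : ¬StartsWith Γ w (letterInv l)) : act l (.mk w hw) = .mk (l :: w) (hw.cons h) :=
  mulLetter_of_not_startsWith (w := ⟨w, hw⟩) h

lemma act_letterInv_act (l : V × Bool) (r : ReducedTrace Γ) :
    act (letterInv l) (act l r) = r := by
  induction r using Quotient.ind with | _ w =>
  obtain ⟨w, hw⟩ := w
  change act _ (act l (.mk w hw)) = .mk w hw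
  by_cases h : StartsWith Γ w (letterInv l)
  · obtain ⟨w', hw'⟩ := h
    have hred := hw.of_startsWith hw'
    have hnot : ¬StartsWith Γ w' (letterInv (letterInv l)) :=
      (hw.of_traceEq hw').not_startsWith_letterInv
    rw [act_mk_of_traceEq hw' hred, act_mk_of_not_startsWith hnot, ReducedTrace.mk_eq_mk]
    exact hw'.symm
  · rw [act_mk_of_not_startsWith h]
    exact act_mk_of_traceEq (by rw [letterInv_letterInv]) hw

lemma act_comm_of_cancel_left {p q : V × Bool} (hpq : Γ.Adj p.1 q.1) {w : List (V × Bool)}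
    (hw : Reduced Γ w) (hq : StartsWith Γ w (letterInv q)) (hp : ¬StartsWith Γ w (letterInv p)) :
    act p (act q (.mk w hw)) = act q (act p (.mk w hw)) := by
  obtain ⟨w₁, hw₁⟩ := hq
  have hred₁ := hw.of_startsWith hw₁
  have hp₁ : ¬StartsWith Γ w₁ (letterInv p) := fun h =>
    hp ((h.cons (m := letterInv q) hpq.symm).of_traceEq hw₁)
  rw [act_mk_of_traceEq hw₁ hred₁, act_mk_of_not_startsWith hp₁, act_mk_of_not_startsWith hp]
  exact (act_mk_of_traceEq ((hw₁.cons p).trans (TraceEq.swap [] w₁ hpq)) _).symm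

lemma act_comm_of_adj {p q : V × Bool} (hpq : Γ.Adj p.1 q.1) (r : ReducedTrace Γ) :
    act p (act q r) = act q (act p r) := by
  induction r using Quotient.ind with | _ w =>
  obtain ⟨w, hw⟩ := w
  change act p (act q (.mk w hw)) = act q (act p (.mk w hw))
  by_cases hq : StartsWith Γ w (letterInv q) <;> by_cases hp : StartsWith Γ w (letterInv p)
  · have hne : letterInv p ≠ letterInv q := fun h =>
      Γ.ne_of_adj hpq (by simpa using congrArg Prod.fst h)
    obtain ⟨-, w₃, hpq₃⟩ := hp.adj_of_ne hq hne
    have hqp₃ := hpq₃.trans (TraceEq.swap [] w₃ hpq)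
    have hred₃ := (hw.of_startsWith hpq₃).of_cons
    rw [act_mk_of_traceEq hpq₃ (hw.of_startsWith hpq₃),
      act_mk_of_traceEq hqp₃ (hw.of_startsWith hqp₃), act_mk_of_traceEq (TraceEq.refl _) hred₃, act_mk_of_traceEq (TraceEq.refl _) hred₃]
  · exact act_comm_of_cancel_left hpq hw hq hp
  · exact (act_comm_of_cancel_left hpq.symm hw hp hq).symm
  · have hqp : ¬StartsWith Γ (q :: w) (letterInv p) := fun h =>
      hp (h.of_cons fun h' => Γ.ne_of_adj hpq (by simpa using (congrArg Prod.fst h').symm))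
    have hpq' : ¬StartsWith Γ (p :: w) (letterInv q) := fun h =>
      hq (h.of_cons fun h' => Γ.ne_of_adj hpq (by simpa using congrArg Prod.fst h'))
    rw [act_mk_of_not_startsWith hq, act_mk_of_not_startsWith hp, act_mk_of_not_startsWith hqp,
      act_mk_of_not_startsWith hpq', ReducedTrace.mk_eq_mk]
    exact TraceEq.swap [] w hpq

noncomputable def actPerm (l : V × Bool) : Equiv.Perm (ReducedTrace Γ) where
  toFun := act l
  invFun := act (letterInv l)
  left_inv := act_letterInv_act l
  right_inv r := by simpa using act_letterInv_act (letterInv l) r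

variable (Γ) in
noncomputable def toPerm : RAAG Γ →* Equiv.Perm (ReducedTrace Γ) :=
  PresentedGroup.toGroup (f := fun v => actPerm (v, true)) <| by
    rintro _ ⟨u, v, huv, rfl⟩
    rw [map_commutatorElement, FreeGroup.lift_apply_of, FreeGroup.lift_apply_of,
      commutatorElement_eq_one_iff_commute]
    exact Equiv.ext (act_comm_of_adj huv)

lemma toPerm_eval_singleton (l : V × Bool) : toPerm Γ (eval Γ [l]) = actPerm l := by
  have hof (v : V) : toPerm Γ (eval Γ [(v, true)]) = actPerm (v, true) :=
    PresentedGroup.toGroup.of _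
  obtain ⟨v, _ | _⟩ := l
  · change toPerm Γ (eval Γ [letterInv (v, true)]) = _
    rw [eval_letterInv, map_inv, hof]
    rfl
  · exact hof v

lemma toPerm_eval_apply_nil {w : List (V × Bool)} (hw : Reduced Γ w) :
    toPerm Γ (eval Γ w) (.mk [] reduced_nil) = .mk w hw := by
  induction w with
  | nil => simp
  | cons l w ih =>
    rw [eval_cons, map_mul, Equiv.Perm.mul_apply, ih hw.of_cons, toPerm_eval_singleton]
    exact act_mk_of_not_startsWith hw.not_startsWith_letterInv

theorem TraceEq.of_eval_eq {w u : List (V × Bool)} (hw : Reduced Γ w) (hu : Reduced Γ u)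
    (h : eval Γ w = eval Γ u) : TraceEq Γ w u := by
  have := congrArg (toPerm Γ · (.mk [] reduced_nil)) h
  simpa only [toPerm_eval_apply_nil hw, toPerm_eval_apply_nil hu, ReducedTrace.mk_eq_mk] using this

end Action

section WordLength

variable {V : Type*} [Fintype V] {Γ : SimpleGraph V}

lemma mem_raagS {s : RAAG Γ} : s ∈ raagS Γ ↔ ∃ l, eval Γ [l] = s := by
  classical
  simp only [raagS, Finset.mem_union, Finset.mem_image, Finset.mem_univ, true_and]
  constructor
  · rintro (⟨v, rfl⟩ | ⟨v, rfl⟩)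
    exacts [⟨(v, true), rfl⟩, ⟨(v, false), eval_letterInv (v, true)⟩]
  · rintro ⟨l, rfl⟩
    rcases eval_singleton_eq_or l with h | h
    exacts [Or.inl ⟨l.1, h.symm⟩, Or.inr ⟨l.1, h.symm⟩]

lemma inv_mem_raagS {s : RAAG Γ} (hs : s ∈ raagS Γ) : s⁻¹ ∈ raagS Γ := by
  obtain ⟨l, rfl⟩ := mem_raagS.mp hs
  exact mem_raagS.mpr ⟨letterInv l, eval_letterInv l⟩

lemma eval_singleton_mem_raagS (l : V × Bool) : eval Γ [l] ∈ raagS Γ :=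
  mem_raagS.mpr ⟨l, rfl⟩

lemma exists_eval_eq_prod {L : List (RAAG Γ)} (hL : ∀ s ∈ L, s ∈ raagS Γ) :
    ∃ w, eval Γ w = L.prod ∧ w.length = L.length := by
  induction L with
  | nil => exact ⟨[], eval_nil, rfl⟩
  | cons s L ih =>
    obtain ⟨l, rfl⟩ := mem_raagS.mp (hL s List.mem_cons_self)
    obtain ⟨w, hw, hlen⟩ := ih fun s hs => hL s (List.mem_cons_of_mem _ hs)
    exact ⟨l :: w, by rw [eval_cons, hw, List.prod_cons], by simp [hlen]⟩

lemma exists_prod_eq_eval (w : List (V × Bool)) :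
    ∃ L : List (RAAG Γ), (∀ s ∈ L, s ∈ (raagS Γ : Set (RAAG Γ))) ∧ L.length = w.length ∧
      L.prod = eval Γ w := by
  refine ⟨w.map (eval Γ [·]), ?_, by simp, (eval_eq_prod w).symm⟩
  simp only [List.mem_map, Finset.mem_coe]
  rintro _ ⟨l, -, rfl⟩
  exact eval_singleton_mem_raagS l

lemma wl_eval_le (w : List (V × Bool)) : wl (raagS Γ) (eval Γ w) ≤ w.length :=
  Nat.sInf_le (exists_prod_eq_eval w)

lemma wl_eval_of_reduced {w : List (V × Bool)} (hw : Reduced Γ w) :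
    wl (raagS Γ) (eval Γ w) = w.length := by
  refine (wl_eval_le w).antisymm (le_csInf ⟨_, exists_prod_eq_eval w⟩ ?_)
  rintro k ⟨L, hL, rfl, hprod⟩
  obtain ⟨w', hw', hlen⟩ := exists_eval_eq_prod hL
  obtain ⟨w₀, hred₀, heval₀, hle₀⟩ := exists_reduced_eval_eq_le w'
  have := TraceEq.of_eval_eq hw hred₀ (by rw [heval₀, hw', hprod])
  rw [this.length_eq, ← hlen]
  exact hle₀

lemma wl_inv (g : RAAG Γ) : wl (raagS Γ) g⁻¹ = wl (raagS Γ) g := by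
  obtain ⟨w, hw, rfl⟩ := exists_reduced_eval_eq g
  rw [← eval_invRev, wl_eval_of_reduced hw.invRev, wl_eval_of_reduced hw, FreeGroup.invRev_length]

lemma wl_eval_singleton_mul_of_startsWith {w : List (V × Bool)} (hw : Reduced Γ w)
    {l : V × Bool} (h : StartsWith Γ w (letterInv l)) :
    wl (raagS Γ) (eval Γ [l] * eval Γ w) + 1 = w.length := by
  obtain ⟨w', hw'⟩ := h
  rw [hw'.eval_eq, eval_cons (letterInv l), eval_letterInv, mul_inv_cancel_left,
    wl_eval_of_reduced (hw.of_startsWith hw'), hw'.length_eq, List.length_cons]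

lemma wl_eval_singleton_mul_of_not_startsWith {w : List (V × Bool)} (hw : Reduced Γ w)
    {l : V × Bool} (h : ¬StartsWith Γ w (letterInv l)) :
    wl (raagS Γ) (eval Γ [l] * eval Γ w) = w.length + 1 := by
  rw [← eval_cons, wl_eval_of_reduced (hw.cons h), List.length_cons]

variable {s : RAAG Γ}

lemma wl_mul_left_of_mem (hs : s ∈ raagS Γ) (g : RAAG Γ) :
    wl (raagS Γ) (s * g) = wl (raagS Γ) g + 1 ∨ wl (raagS Γ) (s * g) + 1 = wl (raagS Γ) g := by
  obtain ⟨l, rfl⟩ := mem_raagS.mp hs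
  obtain ⟨w, hw, rfl⟩ := exists_reduced_eval_eq g
  rw [wl_eval_of_reduced hw]
  by_cases h : StartsWith Γ w (letterInv l)
  · exact Or.inr (wl_eval_singleton_mul_of_startsWith hw h)
  · exact Or.inl (wl_eval_singleton_mul_of_not_startsWith hw h)

lemma wl_mul_right_of_mem (hs : s ∈ raagS Γ) (g : RAAG Γ) :
    wl (raagS Γ) (g * s) = wl (raagS Γ) g + 1 ∨ wl (raagS Γ) (g * s) + 1 = wl (raagS Γ) g := by
  rw [← wl_inv (g * s), ← wl_inv g, mul_inv_rev]
  exact wl_mul_left_of_mem (inv_mem_raagS hs) g⁻¹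

lemma wl_mul_left_le (hs : s ∈ raagS Γ) (g : RAAG Γ) :
    wl (raagS Γ) (s * g) ≤ wl (raagS Γ) g + 1 := by
  rcases wl_mul_left_of_mem hs g with h | h <;> omega

lemma lt_wl_mul_left_or_lt_wl_inv_mul (hs : s ∈ raagS Γ) (g : RAAG Γ) :
    wl (raagS Γ) g < wl (raagS Γ) (s * g) ∨ wl (raagS Γ) g < wl (raagS Γ) (s⁻¹ * g) := by
  obtain ⟨l, rfl⟩ := mem_raagS.mp hs
  obtain ⟨w, hw, rfl⟩ := exists_reduced_eval_eq g
  rw [wl_eval_of_reduced hw, ← eval_letterInv]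
  by_cases h : StartsWith Γ w l
  · rw [wl_eval_singleton_mul_of_not_startsWith hw h.not_letterInv]
    omega
  · have hl : ¬StartsWith Γ w (letterInv (letterInv l)) := by rwa [letterInv_letterInv]
    rw [wl_eval_singleton_mul_of_not_startsWith hw hl]
    omega

lemma lt_wl_mul_right_or_lt_wl_mul_inv (hs : s ∈ raagS Γ) (g : RAAG Γ) :
    wl (raagS Γ) g < wl (raagS Γ) (g * s) ∨ wl (raagS Γ) g < wl (raagS Γ) (g * s⁻¹) := by
  rw [← wl_inv (g * s), ← wl_inv (g * s⁻¹), ← wl_inv g, mul_inv_rev, mul_inv_rev]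
  simpa [or_comm] using lt_wl_mul_left_or_lt_wl_inv_mul (inv_mem_raagS hs) g⁻¹

lemma two_mul_wl_le_wl_conj_add_wl_conj (hs : s ∈ raagS Γ) (g : RAAG Γ) :
    2 * wl (raagS Γ) g ≤ wl (raagS Γ) (s⁻¹ * g * s) + wl (raagS Γ) (s * g * s⁻¹) := by
  have hs' := inv_mem_raagS hs
  have h₁ := wl_mul_left_of_mem hs' g
  have h₂ := wl_mul_left_of_mem hs g
  have h₃ := wl_mul_right_of_mem hs (s⁻¹ * g)
  have h₄ := wl_mul_right_of_mem hs' (s * g)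
  have h₅ := lt_wl_mul_left_or_lt_wl_inv_mul hs g
  have h₆ := lt_wl_mul_right_or_lt_wl_mul_inv hs (s * g)
  have h₇ := lt_wl_mul_right_or_lt_wl_mul_inv hs (s⁻¹ * g)
  -- if one conjugate loses two letters, then `s * g * s` resp. `s⁻¹ * g * s⁻¹` is short too
  have h₈ : wl (raagS Γ) (s * g * s) ≤ wl (raagS Γ) (s⁻¹ * g * s) + 2 := by
    rw [show s * g * s = s * (s * (s⁻¹ * g * s)) by group]
    linarith [wl_mul_left_le hs (s * (s⁻¹ * g * s)), wl_mul_left_le hs (s⁻¹ * g * s)]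
  have h₉ : wl (raagS Γ) (s⁻¹ * g * s⁻¹) ≤ wl (raagS Γ) (s * g * s⁻¹) + 2 := by
    rw [show s⁻¹ * g * s⁻¹ = s⁻¹ * (s⁻¹ * (s * g * s⁻¹)) by group]
    linarith [wl_mul_left_le hs' (s⁻¹ * (s * g * s⁻¹)), wl_mul_left_le hs' (s * g * s⁻¹)]
  omega

lemma exists_traceEq_append_of_wl_lt {w : List (V × Bool)} (hw : Reduced Γ w) {l : V × Bool}
    (h : wl (raagS Γ) (eval Γ w * eval Γ [l]) < w.length) :
    ∃ z, TraceEq Γ w (z ++ [letterInv l]) := by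
  have hstart : StartsWith Γ (FreeGroup.invRev w) l := by
    by_contra hl
    have := wl_eval_singleton_mul_of_not_startsWith hw.invRev (l := letterInv l) (by simpa using hl)
    rw [eval_letterInv, eval_invRev, ← mul_inv_rev, wl_inv, FreeGroup.invRev_length] at this
    omega
  obtain ⟨u, hu⟩ := hstart
  refine ⟨FreeGroup.invRev u, ?_⟩
  simpa [FreeGroup.invRev, letterInv, Function.comp_def] using hu.invRev

/-- The letter cancelled on the right is either a last letter of `g` or the `s` added on the left,
which then commutes past all of `g`. -/
lemma wl_mul_inv_lt_or_forall_adj {w : List (V × Bool)} (hw : Reduced Γ w) {l : V × Bool}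
    (h₁ : wl (raagS Γ) (eval Γ [l] * eval Γ w) = w.length + 1)
    (h₂ : wl (raagS Γ) (eval Γ [l] * eval Γ w * (eval Γ [l])⁻¹) ≤ w.length) :
    wl (raagS Γ) (eval Γ w * (eval Γ [l])⁻¹) < w.length ∨ ∀ m ∈ w, Γ.Adj m.1 l.1 := by
  have hred : Reduced Γ (l :: w) := hw.cons fun h => by
    have := wl_eval_singleton_mul_of_startsWith hw h
    omega
  obtain ⟨z, hz⟩ := exists_traceEq_append_of_wl_lt hred (l := letterInv l)
    (by rw [eval_cons, eval_letterInv, List.length_cons]; omega)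
  obtain ⟨y, t, hdec, hy, hwt⟩ := hz.exists_of_cons
  rcases t.eq_nil_or_concat' with rfl | ⟨t, c, rfl⟩
  · exact Or.inr fun m hm => hy m (by simpa using hwt.perm.subset hm)
  · left
    rw [← List.cons_append, ← List.append_assoc] at hdec
    obtain ⟨-, hc⟩ := List.append_inj' hdec rfl
    obtain rfl : c = l := by simpa using hc.symm
    have hlen := hwt.length_eq
    rw [hwt.eval_eq, ← List.append_assoc, eval_append, mul_inv_cancel_right]
    refine (wl_eval_le _).trans_lt ?_
    simp only [List.length_append, List.length_singleton] at hlen ⊢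
    omega

lemma lt_wl_conj_add_wl_conj {w : List (V × Bool)} (hw : Reduced Γ w) {v : V}
    (hv : ∀ b, ¬StartsWith Γ w (v, b)) (hm : ∃ m ∈ w, ¬Γ.Adj m.1 v) :
    2 * wl (raagS Γ) (eval Γ w) <
      wl (raagS Γ) ((eval Γ [(v, true)])⁻¹ * eval Γ w * eval Γ [(v, true)]) +
        wl (raagS Γ) (eval Γ [(v, true)] * eval Γ w * (eval Γ [(v, true)])⁻¹) := by
  set s := eval Γ [(v, true)]
  set g := eval Γ w
  have hs : s ∈ raagS Γ := eval_singleton_mem_raagS _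
  have hinv : eval Γ [(v, false)] = s⁻¹ := eval_letterInv (v, true)
  have hnot_adj : ¬∀ m ∈ w, Γ.Adj m.1 v := fun h =>
    let ⟨m, hmw, hmv⟩ := hm; hmv (h m hmw)
  have h₁ : wl (raagS Γ) (s * g) = w.length + 1 :=
    wl_eval_singleton_mul_of_not_startsWith hw (hv false)
  have h₂ : wl (raagS Γ) (s⁻¹ * g) = w.length + 1 := by
    rw [← hinv]
    exact wl_eval_singleton_mul_of_not_startsWith hw (hv true)
  have h₃ : wl (raagS Γ) (s * g * s⁻¹) ≤ w.length → wl (raagS Γ) (g * s⁻¹) < w.length :=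
    fun h => (wl_mul_inv_lt_or_forall_adj hw h₁ h).resolve_right hnot_adj
  have h₄ : wl (raagS Γ) (s⁻¹ * g * s) ≤ w.length → wl (raagS Γ) (g * s) < w.length := by
    have := wl_mul_inv_lt_or_forall_adj (l := (v, false)) hw
    rw [hinv, inv_inv] at this
    exact fun h => (this h₂ h).resolve_right hnot_adj
  have := wl_mul_right_of_mem hs (s⁻¹ * g)
  have := wl_mul_right_of_mem (inv_mem_raagS hs) (s * g)
  have := lt_wl_mul_right_or_lt_wl_mul_inv hs g
  have : wl (raagS Γ) g = w.length := wl_eval_of_reduced hw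
  omega

end WordLength

end RAAG

theorem stmt10 {V : Type*} [Fintype V] (Γ : SimpleGraph V) (g : RAAG Γ)
    (hg : g ≠ 1) :
    (g ∈ Subgroup.center (RAAG Γ) → curv (raagS Γ) g = 0) ∧
      (g ∉ Subgroup.center (RAAG Γ) → curv (raagS Γ) g < 0) := by
  obtain ⟨w, hw, rfl⟩ := RAAG.exists_reduced_eval_eq g
  obtain ⟨l, hl⟩ : ∃ l, l ∈ w := List.exists_mem_of_ne_nil w (by rintro rfl; exact hg RAAG.eval_nil)
  have hlen : 0 < wl (raagS Γ) (RAAG.eval Γ w) := by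
    rw [RAAG.wl_eval_of_reduced hw]
    exact List.length_pos_of_mem hl
  refine ⟨curv_eq_zero_of_mem_center ⟨_, RAAG.eval_singleton_mem_raagS l⟩, fun hc => ?_⟩
  obtain ⟨v, hv, hm⟩ := RAAG.exists_vertex_of_not_mem_center hc
  refine curv_neg_of_lt_av hlen (lt_av_of_conj (fun a => RAAG.inv_mem_raagS)
    (fun a ha => RAAG.two_mul_wl_le_wl_conj_add_wl_conj ha _) ?_)
  exact ⟨_, RAAG.eval_singleton_mem_raagS (v, true), RAAG.lt_wl_conj_add_wl_conj hw hv hm⟩
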